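/- arXiv:1807.00627 — 4 statements merged into one kernel-verified Lean document; each statement's English description precedes it below -/
import Mathlib

section
/- Let i ≥ 1 be an integer and suppose λ₁, λ₂, λ₃ are the real roots of q(x) = x^3 - (7i+2)x^2 - (7i+3)x + 12i^3 + 18i^2 + 6i with -2i-1 < λ₁ < 0 < λ₂ ≤ λ₃. Then (5i+1) + (2i+1) + |λ₁| + |λ₂| + |λ₃| < 18i + 8. -/
theorem stmt_5 (i : ℤ) (hi : 1 ≤ i) (l1 l2 l3 : ℝ)
    (hfac : ∀ x : ℝ, x^3 - (7*(i:ℝ)+2)*x^2 - (7*(i:ℝ)+3)*x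
        + 12*(i:ℝ)^3 + 18*(i:ℝ)^2 + 6*(i:ℝ) = (x - l1) * (x - l2) * (x - l3))
    (h1 : -2*(i:ℝ)-1 < l1) (h2 : l1 < 0) (h3 : 0 < l2) (h4 : l2 ≤ l3) :
    (5*(i:ℝ)+1) + (2*(i:ℝ)+1) + (|l1| + |l2| + |l3|) < 18*(i:ℝ) + 8 := by
  have ha := hfac 1
  have hb := hfac (-1)
  have hc := hfac 0
  have hS : l1 + l2 + l3 = 7*(i:ℝ) + 2 := by ring_nf at ha hb hc ⊢; linarith
  have hi' : (1:ℝ) ≤ (i:ℝ) := by exact_mod_cast hi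
  rw [abs_of_neg h2, abs_of_pos h3, abs_of_pos (lt_of_lt_of_le h3 h4)]
  linarith
end

section
/- For every integer i ≥ 1, let S be the multiset of roots (with multiplicity) of P(x) = x^{4i} (x+1)^{5i+1} (x+2i+1) c(x) and S' the multiset of roots of P'(x) = x^{4i+1} (x+1)^{5i} (x+2i+2) c(x), where c(x) = x^3 - (7i+2)x^2 - (7i+3)x + 12i^3 + 18i^2 + 6i. Then the sum of absolute values of the elements of S equals the sum of absolute values of the elements of S'. -/
open Polynomial

theorem stmt_9 (i : ℕ) (hi : 1 ≤ i) :
    ((((X:ℝ[X])^(4*i) * (X+1)^(5*i+1) * (X + C (2*(i:ℝ)+1)) *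
        (X^3 - C (7*(i:ℝ)+2)*X^2 - C (7*(i:ℝ)+3)*X
          + C (12*(i:ℝ)^3 + 18*(i:ℝ)^2 + 6*(i:ℝ)))).roots.map (fun r => |r|)).sum)
    =
    ((((X:ℝ[X])^(4*i+1) * (X+1)^(5*i) * (X + C (2*(i:ℝ)+2)) *
        (X^3 - C (7*(i:ℝ)+2)*X^2 - C (7*(i:ℝ)+3)*X
          + C (12*(i:ℝ)^3 + 18*(i:ℝ)^2 + 6*(i:ℝ)))).roots.map (fun r => |r|)).sum) := by
  set c : ℝ[X] := X^3 - C (7*(i:ℝ)+2)*X^2 - C (7*(i:ℝ)+3)*X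
          + C (12*(i:ℝ)^3 + 18*(i:ℝ)^2 + 6*(i:ℝ)) with hc
  have hdeg : c.degree = 3 := by
    rw [hc]; compute_degree!
  have hcne : c ≠ 0 := by
    intro h; rw [h] at hdeg; simp at hdeg
  have hXne : (X:ℝ[X]) ≠ 0 := X_ne_zero
  have ha1 : ((X:ℝ[X]) + C (2*(i:ℝ)+1)) ≠ 0 := X_add_C_ne_zero _
  have ha2 : ((X:ℝ[X]) + C (2*(i:ℝ)+2)) ≠ 0 := X_add_C_ne_zero _
  have hX1 : ((X:ℝ[X])+1) ≠ 0 := by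
    have := X_add_C_ne_zero (1:ℝ); simpa using this
  have e1 : ((X:ℝ[X])+1) = X - C (-1) := by simp
  have e2 : ((X:ℝ[X]) + C (2*(i:ℝ)+1)) = X - C (-(2*(i:ℝ)+1)) := by
    rw [map_neg, sub_neg_eq_add]
  have e3 : ((X:ℝ[X]) + C (2*(i:ℝ)+2)) = X - C (-(2*(i:ℝ)+2)) := by
    rw [map_neg, sub_neg_eq_add]
  rw [roots_mul (mul_ne_zero (mul_ne_zero (mul_ne_zero (pow_ne_zero _ hXne) (pow_ne_zero _ hX1)) ha1) hcne),
      roots_mul (mul_ne_zero (mul_ne_zero (pow_ne_zero _ hXne) (pow_ne_zero _ hX1)) ha1),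
      roots_mul (mul_ne_zero (pow_ne_zero _ hXne) (pow_ne_zero _ hX1)),
      roots_mul (mul_ne_zero (mul_ne_zero (mul_ne_zero (pow_ne_zero _ hXne) (pow_ne_zero _ hX1)) ha2) hcne),
      roots_mul (mul_ne_zero (mul_ne_zero (pow_ne_zero _ hXne) (pow_ne_zero _ hX1)) ha2),
      roots_mul (mul_ne_zero (pow_ne_zero _ hXne) (pow_ne_zero _ hX1))]
  rw [e1, e2, e3, roots_pow, roots_pow, roots_pow, roots_pow,
      roots_X_sub_C, roots_X_sub_C, roots_X_sub_C, roots_X]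
  simp only [Multiset.map_add, Multiset.sum_add, Multiset.map_nsmul, Multiset.sum_nsmul,
    Multiset.map_singleton, Multiset.sum_singleton]
  have hi' : (1:ℝ) ≤ (i:ℝ) := by exact_mod_cast hi
  rw [abs_of_nonpos (by linarith : -(2*(i:ℝ)+1) ≤ 0),
      abs_of_nonpos (by linarith : -(2*(i:ℝ)+2) ≤ 0)]
  norm_num
  ring
end

section
/- For every integer i ≥ 1, let T be the multiset of roots (with multiplicity) of x^{3i-1}(x+1)^{6i+1}(x+2i+1)r(x) and T' the multiset of roots of x^{3i}(x+1)^{6i}(x+2i+2)r(x), where r(x) = x^4 - (8i+2)x^3 + (8i^2-4i-3)x^2 + (8i^3+20i^2+8i)x - 8i^4 - 12i^3 - 4i^2. Then the sum of absolute values of the elements of T equals the sum of absolute values of the elements of T'. -/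
open Polynomial

lemma roots_X_add_C' (c : ℝ) : ((X : ℝ[X]) + C c).roots = {-c} := by
  rw [show (X : ℝ[X]) + C c = X - C (-c) by simp, roots_X_sub_C]

lemma aux_roots_sum (r : ℝ[X]) (hr : r ≠ 0) (a b : ℕ) (c : ℝ) :
    (((X^a * (X+1)^b * (X + C c) * r).roots.map (fun x => |x|)).sum)
      = (b : ℝ) + |c| + ((r.roots.map fun x => |x|).sum) := by
  have hX : ((X : ℝ[X])^a) ≠ 0 := pow_ne_zero _ X_ne_zero
  have hX1 : ((X : ℝ[X]) + 1) = X + C 1 := by simp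
  have h2 : ((X : ℝ[X]) + 1)^b ≠ 0 := pow_ne_zero _ (by rw [hX1]; exact X_add_C_ne_zero 1)
  have h3 : ((X : ℝ[X]) + C c) ≠ 0 := X_add_C_ne_zero c
  rw [roots_mul (mul_ne_zero (mul_ne_zero (mul_ne_zero hX h2) h3) hr),
    roots_mul (mul_ne_zero (mul_ne_zero hX h2) h3),
    roots_mul (mul_ne_zero hX h2),
    roots_pow, roots_X, hX1, roots_pow, roots_X_add_C', roots_X_add_C']
  simp [Multiset.map_nsmul, Multiset.sum_nsmul, mul_comm, abs_neg]

theorem stmt_12 (i : ℕ) (hi : 1 ≤ i) :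
    ((((X:ℝ[X])^(3*i-1) * (X+1)^(6*i+1) * (X + C (2*(i:ℝ)+1)) *
        (X^4 - C (8*(i:ℝ)+2)*X^3 + C (8*(i:ℝ)^2-4*(i:ℝ)-3)*X^2
          + C (8*(i:ℝ)^3+20*(i:ℝ)^2+8*(i:ℝ))*X
          - C (8*(i:ℝ)^4 + 12*(i:ℝ)^3 + 4*(i:ℝ)^2))).roots.map (fun r => |r|)).sum)
    =
    ((((X:ℝ[X])^(3*i) * (X+1)^(6*i) * (X + C (2*(i:ℝ)+2)) *
        (X^4 - C (8*(i:ℝ)+2)*X^3 + C (8*(i:ℝ)^2-4*(i:ℝ)-3)*X^2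
          + C (8*(i:ℝ)^3+20*(i:ℝ)^2+8*(i:ℝ))*X
          - C (8*(i:ℝ)^4 + 12*(i:ℝ)^3 + 4*(i:ℝ)^2))).roots.map (fun r => |r|)).sum) := by
  have hrm : (X^4 - C (8*(i:ℝ)+2)*X^3 + C (8*(i:ℝ)^2-4*(i:ℝ)-3)*X^2
          + C (8*(i:ℝ)^3+20*(i:ℝ)^2+8*(i:ℝ))*X
          - C (8*(i:ℝ)^4 + 12*(i:ℝ)^3 + 4*(i:ℝ)^2)).Monic := by
    monicity!
  rw [aux_roots_sum _ hrm.ne_zero, aux_roots_sum _ hrm.ne_zero]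
  have h1 : |2*(i:ℝ)+1| = 2*(i:ℝ)+1 := abs_of_nonneg (by positivity)
  have h2 : |2*(i:ℝ)+2| = 2*(i:ℝ)+2 := abs_of_nonneg (by positivity)
  rw [h1, h2]
  push_cast [Nat.cast_sub (by omega : 1 ≤ 6*i+1)]
  ring
end

section
/- For every integer i ≥ 1, the cubic c(x) = x^3 - (7i+2)x^2 - (7i+3)x + 12i^3 + 18i^2 + 6i has three distinct real roots λ₁ < 0 < λ₂ < λ₃, and moreover λ₁ > -(2i+1). -/
lemma quad_zero (A B C x y z : ℝ) (hxy : x < y) (hyz : y < z)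
    (h1 : A*x^2 + B*x + C = 0) (h2 : A*y^2 + B*y + C = 0)
    (h3 : A*z^2 + B*z + C = 0) : A = 0 ∧ B = 0 ∧ C = 0 := by
  have hxy' : x - y ≠ 0 := by linarith
  have hyz' : y - z ≠ 0 := by linarith
  have hxz' : x - z ≠ 0 := by linarith
  have e12 : (x - y) * (A*(x+y) + B) = 0 := by linear_combination h1 - h2
  have e23 : (y - z) * (A*(y+z) + B) = 0 := by linear_combination h2 - h3
  have h12 : A*(x+y) + B = 0 := by
    rcases mul_eq_zero.1 e12 with h | h
    · exact absurd h hxy'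
    · exact h
  have h23 : A*(y+z) + B = 0 := by
    rcases mul_eq_zero.1 e23 with h | h
    · exact absurd h hyz'
    · exact h
  have eA : (x - z) * A = 0 := by linear_combination h12 - h23
  have hA : A = 0 := by
    rcases mul_eq_zero.1 eA with h | h
    · exact absurd h hxz'
    · exact h
  have hB : B = 0 := by linear_combination h12 - (x+y) * hA
  have hC : C = 0 := by linear_combination h1 - x^2 * hA - x * hB
  exact ⟨hA, hB, hC⟩

theorem stmt_15 (i : ℤ) (hi : 1 ≤ i) :
    ∃ l1 l2 l3 : ℝ, l1 < 0 ∧ 0 < l2 ∧ l2 < l3 ∧ -(2*(i:ℝ)+1) < l1 ∧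
      ∀ x : ℝ, x^3 - (7*(i:ℝ)+2)*x^2 - (7*(i:ℝ)+3)*x
        + 12*(i:ℝ)^3 + 18*(i:ℝ)^2 + 6*(i:ℝ) = (x - l1) * (x - l2) * (x - l3) := by
  set a : ℝ := (i : ℝ) with ha
  have hi' : (1:ℝ) ≤ a := by rw [ha]; exact_mod_cast hi
  set f : ℝ → ℝ := fun x => x^3 - (7*a+2)*x^2 - (7*a+3)*x + 12*a^3 + 18*a^2 + 6*a with hf
  have hcont : Continuous f := by fun_prop
  have hfneg : f (-(2*a+1)) = -24*a^3 - 16*a^2 - 2*a := by simp only [hf]; ring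
  have hf0 : f 0 = 12*a^3 + 18*a^2 + 6*a := by simp only [hf]; ring
  have hf6 : f (6*a) = -24*a^3 - 96*a^2 - 12*a := by simp only [hf]; ring
  have hf7 : f (7*a+3) = 12*a^3 + 18*a^2 + 6*a := by simp only [hf]; ring
  have hv1 : f (-(2*a+1)) < 0 := by rw [hfneg]; nlinarith
  have hv2 : 0 < f 0 := by rw [hf0]; nlinarith
  have hv3 : f (6*a) < 0 := by rw [hf6]; nlinarith
  have hv4 : 0 < f (7*a+3) := by rw [hf7]; nlinarith
  have hord1 : -(2*a+1) ≤ (0:ℝ) := by linarith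
  have hord2 : (0:ℝ) ≤ 6*a := by linarith
  have hord3 : 6*a ≤ 7*a+3 := by linarith
  obtain ⟨l1, hl1mem, hl1⟩ := intermediate_value_Ioo hord1 hcont.continuousOn
    (Set.mem_Ioo.2 ⟨hv1, hv2⟩)
  obtain ⟨l2, hl2mem, hl2⟩ := intermediate_value_Ioo' hord2 hcont.continuousOn
    (Set.mem_Ioo.2 ⟨hv3, hv2⟩)
  obtain ⟨l3, hl3mem, hl3⟩ := intermediate_value_Ioo hord3 hcont.continuousOn
    (Set.mem_Ioo.2 ⟨hv3, hv4⟩)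
  obtain ⟨hl1a, hl1b⟩ := hl1mem
  obtain ⟨hl2a, hl2b⟩ := hl2mem
  obtain ⟨hl3a, hl3b⟩ := hl3mem
  have h12 : l1 < l2 := lt_of_lt_of_le hl1b hl2a.le
  have h23 : l2 < l3 := lt_of_lt_of_le hl2b (le_of_lt hl3a)
  -- factorization
  have key := quad_zero ((l1+l2+l3) - (7*a+2)) (-(7*a+3) - (l1*l2 + l1*l3 + l2*l3))
      (12*a^3 + 18*a^2 + 6*a + l1*l2*l3) l1 l2 l3 h12 h23
      (by simp only [hf] at hl1; linear_combination hl1)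
      (by simp only [hf] at hl2; linear_combination hl2)
      (by simp only [hf] at hl3; linear_combination hl3)
  obtain ⟨hA, hB, hC⟩ := key
  refine ⟨l1, l2, l3, hl1b, hl2a, h23, hl1a, fun x => ?_⟩
  linear_combination x^2 * hA + x * hB + hC
end
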